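/- For an analytic function f on [0, T] and a Paley-ordered Walsh index m with rank r(m) and negligibility p(m), the Walsh coefficient satisfies |f̂_m| ≤ 2^{−p(m)} · T^{r(m)} · max_{t∈[0,T]} |f^{(r(m))}(t)|, where f̂_m = (1/T) ∫_0^T f(t) w_m(t/T) dt. -/

import Mathlib

/-- The rank of `m`: the number of ones in the binary expansion of `m`. -/
def rank (m : ℕ) : ℕ := (Nat.digits 2 m).sum

/-- The negligibility of `m`: `p(m) = Σ_k (k+1)·m_k`. -/
def neg (m : ℕ) : ℕ := (((Nat.digits 2 m).zipIdx).map fun p => (p.2 + 2) * p.1).sum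

/-- The `m`'th Paley-ordered Walsh function on `[0,1]`:
`w_m(t) = Π_k ((−1)^{⌊2^k t⌋})^{m_k}`. -/
noncomputable def walsh (m : ℕ) (t : ℝ) : ℝ :=
  ∏ i ∈ Finset.range (Nat.digits 2 m).length,
    ((-1 : ℝ) ^ ⌊(2 : ℝ) ^ (i + 1) * t⌋) ^ ((Nat.digits 2 m).getD i 0)

/-!
Cutting `[0,1]` at `1/2` and rescaling both halves to `[0,1]` turns the coefficient of `w_m` into
the coefficient of `w_{m/2}` of the fold `u ↦ (f (u/2) ± f ((u+1)/2)) / 2`, with the sign given by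
the lowest binary digit of `m`. For even `m` the `r`-th derivative of the fold is at most `2^{-r}`
times that of `f`. For odd `m` the two halves nearly cancel: the mean value theorem bounds their
difference by the next derivative of `f`, trading one unit of rank for a further factor `1/4`.
Induction on `m` gives the bound on `[0,1]`, and the substitution `t = T u` rescales it to `[0,T]`.
-/

open Set MeasureTheory intervalIntegral

lemma sum_map_zipIdx_succ (l : List ℕ) (n : ℕ) :
    ((l.zipIdx (n + 1)).map fun p => (p.2 + 2) * p.1).sum
      = ((l.zipIdx n).map fun p => (p.2 + 2) * p.1).sum + l.sum := by
  induction l generalizing n with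
  | nil => simp
  | cons a l ih => simp only [List.zipIdx_cons, List.map_cons, List.sum_cons, ih]; ring

lemma rank_eq_mod_two_add_rank_div_two (m : ℕ) : rank m = m % 2 + rank (m / 2) := by
  rcases m.eq_zero_or_pos with rfl | hm
  · simp [rank]
  · simp [rank, Nat.digits_def' one_lt_two hm]

lemma neg_eq_mod_two_add_rank_add_neg_div_two (m : ℕ) :
    neg m = 2 * (m % 2) + rank (m / 2) + neg (m / 2) := by
  rcases m.eq_zero_or_pos with rfl | hm
  · simp [neg, rank]
  · simp only [neg, rank, Nat.digits_def' one_lt_two hm, List.zipIdx_cons, List.map_cons,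
      List.sum_cons, sum_map_zipIdx_succ]
    ring

section IteratedDeriv

variable {𝕜 F : Type*} [NontriviallyNormedField 𝕜] [NormedAddCommGroup F] [NormedSpace 𝕜 F]

lemma iteratedDeriv_comp_mul_left (n : ℕ) (f : 𝕜 → F) (c : 𝕜) :
    iteratedDeriv n (fun x => f (c * x)) = fun x => c ^ n • iteratedDeriv n f (c * x) := by
  induction n with
  | zero => simp
  | succ n ih =>
    funext x
    rw [iteratedDeriv_succ, ih, deriv_fun_const_smul_field,
      deriv_comp_mul_left c (iteratedDeriv n f), iteratedDeriv_succ, smul_smul, pow_succ]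

lemma iteratedDeriv_comp_mul_add (n : ℕ) (f : 𝕜 → F) (c d : 𝕜) :
    iteratedDeriv n (fun x => f (c * x + d)) = fun x => c ^ n • iteratedDeriv n f (c * x + d) := by
  rw [iteratedDeriv_comp_mul_left n (fun y => f (y + d)), iteratedDeriv_comp_add_const]

lemma ContDiffAt.continuousAt_iteratedDeriv {n : WithTop ℕ∞} {k : ℕ} {f : 𝕜 → F} {x : 𝕜}
    (hf : ContDiffAt 𝕜 n f x) (hk : k ≤ n) : ContinuousAt (iteratedDeriv k f) x := by
  rw [iteratedDeriv_eq_equiv_comp]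
  exact (LinearIsometryEquiv.continuous _).continuousAt.comp
    (hf.continuousAt_iteratedFDeriv hk)

lemma ContDiffAt.differentiableAt_iteratedDeriv {n : WithTop ℕ∞} {k : ℕ} {f : 𝕜 → F} {x : 𝕜}
    (hf : ContDiffAt 𝕜 n f x) (hk : k < n) : DifferentiableAt 𝕜 (iteratedDeriv k f) x := by
  rw [iteratedDeriv_eq_equiv_comp]
  exact (LinearIsometryEquiv.differentiableAt _).comp x (hf.differentiableAt_iteratedFDeriv hk)

end IteratedDeriv

lemma abs_iteratedDeriv_sub_le {k : ℕ} {f : ℝ → ℝ} {s : Set ℝ} (hs : Convex ℝ s)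
    (hf : ∀ x ∈ s, ContDiffAt ℝ (k + 1) f x) {M : ℝ}
    (hM : ∀ x ∈ s, |iteratedDeriv (k + 1) f x| ≤ M) {x y : ℝ} (hx : x ∈ s) (hy : y ∈ s) :
    |iteratedDeriv k f x - iteratedDeriv k f y| ≤ M * |x - y| :=
  hs.norm_image_sub_le_of_norm_deriv_le
    (fun z hz => (hf z hz).differentiableAt_iteratedDeriv (by norm_cast; omega))
    (fun z hz => by simpa [iteratedDeriv_succ] using hM z hz) hy hx

lemma walsh_zero (t : ℝ) : walsh 0 t = 1 := by simp [walsh]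

lemma abs_walsh_le_one (m : ℕ) (t : ℝ) : |walsh m t| ≤ 1 := by
  rw [walsh, Finset.abs_prod]
  refine Finset.prod_le_one (fun _ _ => abs_nonneg _) fun i _ => ?_
  rw [abs_pow, abs_zpow, abs_neg, abs_one, one_zpow, one_pow]

lemma measurable_walsh (m : ℕ) : Measurable (walsh m) :=
  Finset.measurable_prod _ fun _ _ =>
    (measurable_from_top.comp (Int.measurable_floor.comp (measurable_id.const_mul _))).pow_const _

lemma walsh_add_one (m : ℕ) (t : ℝ) : walsh m (t + 1) = walsh m t := by
  refine Finset.prod_congr rfl fun i _ => ?_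
  have : (2 : ℝ) ^ (i + 1) * (t + 1) = 2 ^ (i + 1) * t + ((2 * 2 ^ i : ℕ) : ℤ) := by
    push_cast; ring
  rw [this, Int.floor_add_intCast, zpow_add₀ (by norm_num), zpow_natCast, pow_mul]
  norm_num

lemma walsh_eq_walsh_div_two_mul (m : ℕ) (t : ℝ) :
    walsh m t = walsh (m / 2) (2 * t) * ((-1 : ℝ) ^ ⌊2 * t⌋) ^ (m % 2) := by
  rcases m.eq_zero_or_pos with rfl | hm
  · simp [walsh]
  rw [walsh, Nat.digits_def' one_lt_two hm, List.length_cons, Finset.prod_range_succ']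
  congr 1
  · refine Finset.prod_congr rfl fun i _ => ?_
    rw [List.getD_cons_succ, pow_succ, mul_assoc]
  · simp

lemma walsh_inv_two_mul {u : ℝ} (hu : u ∈ Ico 0 1) (m : ℕ) :
    walsh m (2⁻¹ * u) = walsh (m / 2) u := by
  have : ⌊u⌋ = 0 := Int.floor_eq_zero_iff.mpr hu
  rw [walsh_eq_walsh_div_two_mul, mul_inv_cancel_left₀ two_ne_zero, this]
  simp

lemma walsh_inv_two_mul_add_inv_two {u : ℝ} (hu : u ∈ Ico 0 1) (m : ℕ) :
    walsh m (2⁻¹ * u + 2⁻¹) = (-1) ^ (m % 2) * walsh (m / 2) u := by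
  have : ⌊u + 1⌋ = 1 := by rw [Int.floor_add_one, Int.floor_eq_zero_iff.mpr hu, zero_add]
  rw [walsh_eq_walsh_div_two_mul, show 2 * (2⁻¹ * u + 2⁻¹) = u + 1 by ring, this, walsh_add_one,
    zpow_one, mul_comm]

lemma IntervalIntegrable.mul_walsh {f : ℝ → ℝ} {a b : ℝ} (hf : IntervalIntegrable f volume a b)
    (m : ℕ) : IntervalIntegrable (fun t => f t * walsh m t) volume a b :=
  intervalIntegrable_iff.mpr <| (intervalIntegrable_iff.mp hf).mul_bdd
    (measurable_walsh m).aestronglyMeasurable (ae_of_all _ (abs_walsh_le_one m))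

lemma integral_zero_one_eq_half_add_half {E : Type*} [NormedAddCommGroup E] [NormedSpace ℝ E]
    {h : ℝ → E} (hh : IntervalIntegrable h volume 0 1) :
    ∫ x in (0 : ℝ)..1, h x
      = (2⁻¹ : ℝ) • (∫ u in (0 : ℝ)..1, h (2⁻¹ * u))
        + (2⁻¹ : ℝ) • ∫ u in (0 : ℝ)..1, h (2⁻¹ * u + 2⁻¹) := by
  rw [smul_integral_comp_mul_left h, smul_integral_comp_mul_add h]
  have hmid : (1 / 2 : ℝ) ∈ uIcc 0 1 := by norm_num [mem_uIcc]
  norm_num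
  exact (integral_add_adjacent_intervals (hh.mono_set (uIcc_subset_uIcc left_mem_uIcc hmid))
    (hh.mono_set (uIcc_subset_uIcc hmid right_mem_uIcc))).symm

noncomputable def dyadicFold (s : ℝ) (f : ℝ → ℝ) (u : ℝ) : ℝ :=
  2⁻¹ * (f (2⁻¹ * u) + s * f (2⁻¹ * u + 2⁻¹))

lemma halves_mem_Icc {u : ℝ} (hu : u ∈ Icc (0 : ℝ) 1) :
    2⁻¹ * u ∈ Icc (0 : ℝ) 1 ∧ 2⁻¹ * u + 2⁻¹ ∈ Icc (0 : ℝ) 1 :=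
  ⟨⟨by linarith [hu.1], by linarith [hu.2]⟩, ⟨by linarith [hu.1], by linarith [hu.2]⟩⟩

lemma integral_mul_walsh_eq_integral_dyadicFold_mul_walsh {f : ℝ → ℝ}
    (hf : ContinuousOn f (Icc 0 1)) (m : ℕ) :
    ∫ t in (0 : ℝ)..1, f t * walsh m t
      = ∫ u in (0 : ℝ)..1, dyadicFold ((-1) ^ (m % 2)) f u * walsh (m / 2) u := by
  have hcont : ∀ d : ℝ, d ∈ Icc (0 : ℝ) 2⁻¹ →
      IntervalIntegrable (fun u => f (2⁻¹ * u + d)) volume 0 1 := fun d hd =>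
    ContinuousOn.intervalIntegrable <| hf.comp (by fun_prop) fun u hu => by
      rw [uIcc_of_le zero_le_one] at hu
      exact ⟨by linarith [hu.1, hd.1], by linarith [hu.2, hd.2]⟩
  have hae : ∀ᵐ u : ℝ, u ∈ uIoc 0 1 → u ∈ Ico 0 1 := (volume.ae_ne 1).mono fun u hu hmem => by
    rw [uIoc_of_le zero_le_one] at hmem
    exact ⟨hmem.1.le, lt_of_le_of_ne hmem.2 hu⟩
  have hleft : ∫ u in (0 : ℝ)..1, f (2⁻¹ * u) * walsh m (2⁻¹ * u)
      = ∫ u in (0 : ℝ)..1, f (2⁻¹ * u + 0) * walsh (m / 2) u :=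
    integral_congr_ae <| hae.mono fun u hu hmem => by rw [walsh_inv_two_mul (hu hmem), add_zero]
  have hright : ∫ u in (0 : ℝ)..1, f (2⁻¹ * u + 2⁻¹) * walsh m (2⁻¹ * u + 2⁻¹)
      = ∫ u in (0 : ℝ)..1, (-1) ^ (m % 2) * (f (2⁻¹ * u + 2⁻¹) * walsh (m / 2) u) :=
    integral_congr_ae <| hae.mono fun u hu hmem => by
      rw [walsh_inv_two_mul_add_inv_two (hu hmem)]; ring
  rw [integral_zero_one_eq_half_add_half
      ((hf.intervalIntegrable_of_Icc zero_le_one).mul_walsh m), hleft, hright]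
  simp only [smul_eq_mul, ← intervalIntegral.integral_const_mul]
  rw [← integral_add (((hcont 0 (by norm_num)).mul_walsh _).const_mul _)
      ((((hcont 2⁻¹ (by norm_num)).mul_walsh _).const_mul _).const_mul _)]
  refine integral_congr fun u _ => ?_
  simp only [dyadicFold, add_zero]
  ring

section DyadicFold

variable {n : ℕ} {f : ℝ → ℝ}

lemma contDiffAt_dyadicFold (hf : ∀ x ∈ Icc (0 : ℝ) 1, ContDiffAt ℝ n f x) (s : ℝ) {u : ℝ}
    (hu : u ∈ Icc (0 : ℝ) 1) : ContDiffAt ℝ n (dyadicFold s f) u :=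
  contDiffAt_const.mul <| ((hf _ (halves_mem_Icc hu).1).comp u (by fun_prop)).add <|
    contDiffAt_const.mul <| (hf _ (halves_mem_Icc hu).2).comp u (by fun_prop)

lemma iteratedDeriv_dyadicFold (hf : ∀ x ∈ Icc (0 : ℝ) 1, ContDiffAt ℝ n f x) (s : ℝ) {u : ℝ}
    (hu : u ∈ Icc (0 : ℝ) 1) :
    iteratedDeriv n (dyadicFold s f) u
      = 2⁻¹ ^ (n + 1) * (iteratedDeriv n f (2⁻¹ * u) + s * iteratedDeriv n f (2⁻¹ * u + 2⁻¹)) := by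
  have h₁ : ContDiffAt ℝ n (fun v => f (2⁻¹ * v)) u :=
    (hf _ (halves_mem_Icc hu).1).comp u (by fun_prop)
  have h₂ : ContDiffAt ℝ n (fun v => s * f (2⁻¹ * v + 2⁻¹)) u :=
    contDiffAt_const.mul <| (hf _ (halves_mem_Icc hu).2).comp u (by fun_prop)
  unfold dyadicFold
  rw [iteratedDeriv_const_mul_field, iteratedDeriv_fun_add h₁ h₂, iteratedDeriv_const_mul_field,
    iteratedDeriv_comp_mul_left, iteratedDeriv_comp_mul_add]
  simp only [smul_eq_mul]
  ring

lemma abs_iteratedDeriv_dyadicFold_one_le (hf : ∀ x ∈ Icc (0 : ℝ) 1, ContDiffAt ℝ n f x)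
    {M : ℝ} (hM : ∀ x ∈ Icc (0 : ℝ) 1, |iteratedDeriv n f x| ≤ M) {u : ℝ}
    (hu : u ∈ Icc (0 : ℝ) 1) : |iteratedDeriv n (dyadicFold 1 f) u| ≤ M / 2 ^ n := by
  rw [iteratedDeriv_dyadicFold hf 1 hu, one_mul, abs_mul, abs_of_pos (by positivity)]
  calc 2⁻¹ ^ (n + 1) * |iteratedDeriv n f (2⁻¹ * u) + iteratedDeriv n f (2⁻¹ * u + 2⁻¹)|
      ≤ 2⁻¹ ^ (n + 1) * (M + M) := by
        gcongr
        exact (abs_add_le _ _).trans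
          (add_le_add (hM _ (halves_mem_Icc hu).1) (hM _ (halves_mem_Icc hu).2))
    _ = M / 2 ^ n := by rw [div_eq_mul_inv, ← inv_pow]; ring

lemma abs_iteratedDeriv_dyadicFold_neg_one_le
    (hf : ∀ x ∈ Icc (0 : ℝ) 1, ContDiffAt ℝ (n + 1) f x)
    {M : ℝ} (hM : ∀ x ∈ Icc (0 : ℝ) 1, |iteratedDeriv (n + 1) f x| ≤ M) {u : ℝ}
    (hu : u ∈ Icc (0 : ℝ) 1) : |iteratedDeriv n (dyadicFold (-1) f) u| ≤ M / 2 ^ (n + 2) := by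
  have hf' : ∀ x ∈ Icc (0 : ℝ) 1, ContDiffAt ℝ n f x := fun x hx =>
    (hf x hx).of_le (by norm_cast; omega)
  rw [iteratedDeriv_dyadicFold hf' (-1) hu, neg_one_mul, ← sub_eq_add_neg, abs_mul,
    abs_of_pos (by positivity)]
  calc 2⁻¹ ^ (n + 1) * |iteratedDeriv n f (2⁻¹ * u) - iteratedDeriv n f (2⁻¹ * u + 2⁻¹)|
      ≤ 2⁻¹ ^ (n + 1) * (M * |2⁻¹ * u - (2⁻¹ * u + 2⁻¹)|) := by
        gcongr
        exact abs_iteratedDeriv_sub_le (convex_Icc 0 1) (by exact_mod_cast hf) hM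
          (halves_mem_Icc hu).1 (halves_mem_Icc hu).2
    _ = M / 2 ^ (n + 2) := by
        rw [show 2⁻¹ * u - (2⁻¹ * u + 2⁻¹) = -2⁻¹ by ring, abs_neg, abs_of_pos (by norm_num),
          div_eq_mul_inv, ← inv_pow]
        ring

end DyadicFold

theorem abs_integral_mul_walsh_le (m : ℕ) {f : ℝ → ℝ}
    (hf : ∀ x ∈ Icc (0 : ℝ) 1, ContDiffAt ℝ (rank m) f x) {M : ℝ}
    (hM : ∀ x ∈ Icc (0 : ℝ) 1, |iteratedDeriv (rank m) f x| ≤ M) :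
    |∫ t in (0 : ℝ)..1, f t * walsh m t| ≤ M / 2 ^ neg m := by
  induction m using Nat.strong_induction_on generalizing f M with
  | _ m ih =>
  rcases eq_or_ne m 0 with rfl | hm
  · simp only [rank, neg, Nat.digits_zero, List.sum_nil, iteratedDeriv_zero] at hM ⊢
    have hbound : ∀ x ∈ uIoc (0 : ℝ) 1, ‖f x‖ ≤ M := fun x hx =>
      hM x ((uIcc_of_le zero_le_one).subset (uIoc_subset_uIcc hx))
    simpa [walsh_zero] using norm_integral_le_of_norm_le_const hbound
  have hlt : m / 2 < m := Nat.div_lt_self (Nat.pos_of_ne_zero hm) one_lt_two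
  rw [integral_mul_walsh_eq_integral_dyadicFold_mul_walsh
    (fun x hx => (hf x hx).continuousAt.continuousWithinAt) m,
    neg_eq_mod_two_add_rank_add_neg_div_two]
  rcases Nat.mod_two_eq_zero_or_one m with h | h
  · rw [rank_eq_mod_two_add_rank_div_two, h, zero_add] at hf hM
    rw [h, pow_zero, mul_zero, zero_add, pow_add, ← div_div]
    exact ih _ hlt (fun u hu => contDiffAt_dyadicFold hf 1 hu)
      (fun u hu => abs_iteratedDeriv_dyadicFold_one_le hf hM hu)
  · rw [rank_eq_mod_two_add_rank_div_two, h, add_comm] at hf hM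
    have hf' : ∀ x ∈ Icc (0 : ℝ) 1, ContDiffAt ℝ (rank (m / 2)) f x := fun x hx =>
      (hf x hx).of_le (by norm_cast; omega)
    rw [h, pow_one, mul_one, add_comm 2, pow_add, ← div_div]
    exact ih _ hlt (fun u hu => contDiffAt_dyadicFold hf' (-1) hu)
      (fun u hu => abs_iteratedDeriv_dyadicFold_neg_one_le hf hM hu)

/-- for an analytic `f` on `[0,T]` the Walsh coefficient
`f̂_m = (1/T)∫_0^T f(t) w_m(t/T) dt` satisfies
`|f̂_m| ≤ 2^{−p(m)} T^{r(m)} max_{t∈[0,T]} |f^{(r(m))}(t)|`. -/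
theorem walsh_coefficient_bound (T : ℝ) (hT : 0 < T) (f : ℝ → ℝ)
    (hf : AnalyticOnNhd ℝ f (Set.Icc 0 T)) (m : ℕ) :
    |(1 / T) * ∫ t in (0:ℝ)..T, f t * walsh m (t / T)| ≤
      (2 : ℝ) ^ (-(neg m : ℤ)) * T ^ rank m *
        ⨆ t : Set.Icc (0:ℝ) T, |iteratedDeriv (rank m) f t| := by
  have hsmooth : ∀ x ∈ Icc 0 T, ContDiffAt ℝ (rank m) f x := fun x hx => (hf x hx).contDiffAt
  have hbdd : BddAbove (range fun t : Icc 0 T => |iteratedDeriv (rank m) f t|) :=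
    (isCompact_range (ContinuousOn.domRestrict fun x hx =>
      ((hsmooth x hx).continuousAt_iteratedDeriv le_rfl).abs.continuousWithinAt)).bddAbove
  have hscale : ∀ u ∈ Icc (0 : ℝ) 1, T * u ∈ Icc 0 T := fun u hu =>
    ⟨by nlinarith [hu.1], by nlinarith [hu.2]⟩
  have hunit := abs_integral_mul_walsh_le m (f := fun u => f (T * u))
    (fun u hu => (hsmooth _ (hscale u hu)).comp u (by fun_prop))
    (M := T ^ rank m * ⨆ t : Icc (0 : ℝ) T, |iteratedDeriv (rank m) f t|) fun u hu => by
      simp only [iteratedDeriv_comp_mul_left, smul_eq_mul]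
      rw [abs_mul, abs_of_pos (by positivity)]
      exact mul_le_mul_of_nonneg_left (le_ciSup hbdd ⟨_, hscale u hu⟩) (by positivity)
  have hrescale : ∫ t in (0 : ℝ)..T, f t * walsh m (t / T)
      = T * ∫ u in (0 : ℝ)..1, f (T * u) * walsh m u := by
    simpa [mul_div_cancel₀, hT.ne'] using
      integral_comp_div (fun u => f (T * u) * walsh m u) hT.ne' (a := 0) (b := T)
  rw [hrescale, one_div, inv_mul_cancel_left₀ hT.ne', zpow_neg, zpow_natCast]
  exact hunit.trans_eq (by ring)
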